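/- Let U ⊆ ℂ be open, f : U → ℂ holomorphic, and z ∈ U with f′(z) ≠ 0. Set e^{2u} = 4|f′|²/(1+|f|²)² and ψ = 2f/(1+|f|²). Then at z: (i) e^{−2u}∂_z̄ψ = −f²/(2f′); (ii) e^{−2u}∂_z̄(Re ψ) = (1 − f²)/(4f′); (iii) e^{−2u}∂_z̄(Im ψ) = i(1 + f²)/(4f′). In particular the complex gradients of Re ψ and Im ψ with respect to the pullback metric are holomorphic wherever f′ is nonvanishing. -/

import Mathlib

/-!
Wirtinger calculus: `∂_z̄` kills holomorphic functions and sends `f̄` to `conj f′`, so with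
`D = 1 + f f̄` one gets `∂_z̄ D = f · conj f′`, hence `∂_z̄ ψ = -2 f² conj f′ / D²` and
`∂_z̄ ψ̄ = 2 conj f′ / D²`. Each is `conj f′ / D²` times a holomorphic expression in `f`, and the
factor `e^{-2u} = D² / (4 f′ conj f′)` cancels exactly `conj f′ / D²`; `Re ψ` and `Im ψ` follow
by linearity from `ψ` and `ψ̄`.
-/

/-- The Wirtinger derivative `∂_z̄ = ½(∂/∂x + i ∂/∂y)` of a complex-valued function on
`ℂ ≃ ℝ²`, computed via the real Fréchet derivative. -/
noncomputable def dzbar (φ : ℂ → ℂ) (z : ℂ) : ℂ :=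
  (1 / 2 : ℂ) * (fderiv ℝ φ z 1 + Complex.I * fderiv ℝ φ z Complex.I)

open Complex ComplexConjugate ContinuousLinearMap

theorem DifferentiableAt.conj {E : Type*} [NormedAddCommGroup E] [NormedSpace ℝ E]
    {g : E → ℂ} {x : E} (hg : DifferentiableAt ℝ g x) :
    DifferentiableAt ℝ (fun w => conj (g w)) x :=
  conjCLE.differentiableAt.comp x hg

section Wirtinger

variable {φ χ : ℂ → ℂ} {z : ℂ}

theorem dzbar_add (hφ : DifferentiableAt ℝ φ z) (hχ : DifferentiableAt ℝ χ z) :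
    dzbar (fun w => φ w + χ w) z = dzbar φ z + dzbar χ z := by
  simp only [dzbar, fderiv_fun_add hφ hχ, add_apply]
  ring

theorem dzbar_sub (hφ : DifferentiableAt ℝ φ z) (hχ : DifferentiableAt ℝ χ z) :
    dzbar (fun w => φ w - χ w) z = dzbar φ z - dzbar χ z := by
  simp only [dzbar, fderiv_fun_sub hφ hχ, sub_apply]
  ring

theorem dzbar_mul (hφ : DifferentiableAt ℝ φ z) (hχ : DifferentiableAt ℝ χ z) :
    dzbar (fun w => φ w * χ w) z = φ z * dzbar χ z + χ z * dzbar φ z := by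
  simp only [dzbar, fderiv_fun_mul hφ hχ, add_apply, smul_apply, smul_eq_mul]
  ring

theorem dzbar_inv (hφ : DifferentiableAt ℝ φ z) (hz : φ z ≠ 0) :
    dzbar (fun w => (φ w)⁻¹) z = -dzbar φ z / φ z ^ 2 := by
  have h : fderiv ℝ (fun w => (φ w)⁻¹) z =
      -(mulLeftRight ℝ ℂ (φ z)⁻¹ (φ z)⁻¹).comp (fderiv ℝ φ z) :=
    ((hasFDerivAt_inv' hz).comp z hφ.hasFDerivAt).fderiv
  simp only [dzbar, h, neg_apply, comp_apply, mulLeftRight_apply]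
  field_simp
  ring

theorem DifferentiableAt.dzbar_eq_zero {f : ℂ → ℂ} (hf : DifferentiableAt ℂ f z) :
    dzbar f z = 0 := by
  simp only [dzbar, hf.fderiv_restrictScalars ℝ, coe_restrictScalars', fderiv_eq_smul_deriv,
    smul_eq_mul]
  linear_combination (1 / 2 * deriv f z) * I_mul_I

theorem dzbar_const (c : ℂ) : dzbar (fun _ => c) z = 0 :=
  DifferentiableAt.dzbar_eq_zero (differentiableAt_const c)

theorem DifferentiableAt.dzbar_conj {f : ℂ → ℂ} (hf : DifferentiableAt ℂ f z) :
    dzbar (fun w => conj (f w)) z = conj (deriv f z) := by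
  have h : fderiv ℝ (fun w => conj (f w)) z = (conjCLE : ℂ →L[ℝ] ℂ).comp (fderiv ℝ f z) :=
    conjCLE.comp_fderiv
  simp only [dzbar, h, hf.fderiv_restrictScalars ℝ, comp_apply, coe_restrictScalars',
    ContinuousLinearEquiv.coe_coe, conjCLE_apply, fderiv_eq_smul_deriv, smul_eq_mul, map_mul,
    conj_I, map_one]
  linear_combination (-(1 / 2) * conj (deriv f z)) * I_mul_I

theorem dzbar_const_mul (hφ : DifferentiableAt ℝ φ z) (c : ℂ) :
    dzbar (fun w => c * φ w) z = c * dzbar φ z := by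
  rw [dzbar_mul (differentiableAt_const c) hφ, dzbar_const]
  ring

theorem dzbar_div_const (hφ : DifferentiableAt ℝ φ z) (c : ℂ) :
    dzbar (fun w => φ w / c) z = dzbar φ z / c := by
  simp only [div_eq_mul_inv, dzbar_mul hφ (differentiableAt_const c⁻¹), dzbar_const]
  ring

theorem dzbar_ofReal_re (hφ : DifferentiableAt ℝ φ z) :
    dzbar (fun w => ((φ w).re : ℂ)) z = (dzbar φ z + dzbar (fun w => conj (φ w)) z) / 2 := by
  simp only [re_eq_add_conj]
  rw [dzbar_div_const (hφ.fun_add hφ.conj), dzbar_add hφ hφ.conj]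

theorem dzbar_ofReal_im (hφ : DifferentiableAt ℝ φ z) :
    dzbar (fun w => ((φ w).im : ℂ)) z =
      (dzbar φ z - dzbar (fun w => conj (φ w)) z) / (2 * I) := by
  simp only [im_eq_sub_conj]
  rw [dzbar_div_const (hφ.fun_sub hφ.conj), dzbar_sub hφ hφ.conj]

end Wirtinger

/-- The horizontal coordinates `x₁ + i x₂` of the inverse stereographic projection of `f`. -/
noncomputable def stereoXY (f : ℂ → ℂ) (w : ℂ) : ℂ :=
  2 * f w / ((1 + ‖f w‖ ^ 2 : ℝ) : ℂ)

/-- The `∂_z`-coefficient `e^{-2u} ∂_z̄ φ` of the complex gradient of `φ` for the pullback by `f`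
of the spherical metric. -/
noncomputable def sphericalGradient (f φ : ℂ → ℂ) (z : ℂ) : ℂ :=
  (((1 + ‖f z‖ ^ 2) ^ 2 / (4 * ‖deriv f z‖ ^ 2) : ℝ) : ℂ) * dzbar φ z

theorem ofReal_one_add_norm_sq_eq (a : ℂ) : ((1 + ‖a‖ ^ 2 : ℝ) : ℂ) = 1 + a * conj a := by
  push_cast
  rw [mul_conj']

theorem ofReal_one_add_norm_sq_ne_zero (a : ℂ) : ((1 + ‖a‖ ^ 2 : ℝ) : ℂ) ≠ 0 :=
  ofReal_ne_zero.mpr (by positivity)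

theorem DifferentiableAt.ofReal_one_add_norm_sq {g : ℂ → ℂ} {z : ℂ}
    (hg : DifferentiableAt ℝ g z) :
    DifferentiableAt ℝ (fun w => ((1 + ‖g w‖ ^ 2 : ℝ) : ℂ)) z := by
  simp only [ofReal_one_add_norm_sq_eq]
  exact (differentiableAt_const 1).fun_add (hg.fun_mul hg.conj)

theorem sphericalGradient_eq_of_dzbar_eq {f φ : ℂ → ℂ} {z : ℂ} (hfz : deriv f z ≠ 0) (c : ℂ)
    (hφ : dzbar φ z = c * conj (deriv f z) / ((1 + ‖f z‖ ^ 2 : ℝ) : ℂ) ^ 2) :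
    sphericalGradient f φ z = c / (4 * deriv f z) := by
  have hD := ofReal_one_add_norm_sq_ne_zero (f z)
  have hconj : conj (deriv f z) ≠ 0 := (map_ne_zero _).mpr hfz
  have hfactor : (((1 + ‖f z‖ ^ 2) ^ 2 / (4 * ‖deriv f z‖ ^ 2) : ℝ) : ℂ) =
      ((1 + ‖f z‖ ^ 2 : ℝ) : ℂ) ^ 2 / (4 * (deriv f z * conj (deriv f z))) := by
    rw [mul_conj']
    push_cast
    ring
  rw [sphericalGradient, hfactor, hφ]
  field_simp

section Sphere

variable {f : ℂ → ℂ} {z : ℂ}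

theorem DifferentiableAt.dzbar_one_add_norm_sq (hf : DifferentiableAt ℂ f z) :
    dzbar (fun w => ((1 + ‖f w‖ ^ 2 : ℝ) : ℂ)) z = f z * conj (deriv f z) := by
  have hf' := hf.restrictScalars ℝ
  simp only [ofReal_one_add_norm_sq_eq]
  rw [dzbar_add (differentiableAt_const 1) (hf'.fun_mul hf'.conj), dzbar_const,
    dzbar_mul hf' hf'.conj, hf.dzbar_conj, hf.dzbar_eq_zero]
  ring

theorem stereoXY_eq_mul_inv (f : ℂ → ℂ) :
    stereoXY f = fun w => 2 * f w * (((1 + ‖f w‖ ^ 2 : ℝ) : ℂ))⁻¹ :=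
  funext fun _ => div_eq_mul_inv _ _

theorem conj_stereoXY (f : ℂ → ℂ) (w : ℂ) :
    conj (stereoXY f w) = 2 * conj (f w) * (((1 + ‖f w‖ ^ 2 : ℝ) : ℂ))⁻¹ := by
  rw [stereoXY, map_div₀, map_mul, map_ofNat, conj_ofReal, div_eq_mul_inv]

theorem DifferentiableAt.differentiableAt_stereoXY (hf : DifferentiableAt ℂ f z) :
    DifferentiableAt ℝ (stereoXY f) z := by
  rw [stereoXY_eq_mul_inv]
  exact ((hf.const_mul 2).restrictScalars ℝ).fun_mul
    ((hf.restrictScalars ℝ).ofReal_one_add_norm_sq.inv (ofReal_one_add_norm_sq_ne_zero _))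

theorem DifferentiableAt.dzbar_stereoXY (hf : DifferentiableAt ℂ f z) :
    dzbar (stereoXY f) z =
      -2 * f z ^ 2 * conj (deriv f z) / ((1 + ‖f z‖ ^ 2 : ℝ) : ℂ) ^ 2 := by
  have hD := (hf.restrictScalars ℝ).ofReal_one_add_norm_sq
  have hD0 := ofReal_one_add_norm_sq_ne_zero (f z)
  have hDinv : DifferentiableAt ℝ (fun w => (((1 + ‖f w‖ ^ 2 : ℝ) : ℂ))⁻¹) z := hD.inv hD0
  rw [stereoXY_eq_mul_inv, dzbar_mul ((hf.const_mul 2).restrictScalars ℝ) hDinv,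
    dzbar_inv hD hD0, hf.dzbar_one_add_norm_sq, (hf.const_mul 2).dzbar_eq_zero]
  ring

theorem DifferentiableAt.dzbar_conj_stereoXY (hf : DifferentiableAt ℂ f z) :
    dzbar (fun w => conj (stereoXY f w)) z =
      2 * conj (deriv f z) / ((1 + ‖f z‖ ^ 2 : ℝ) : ℂ) ^ 2 := by
  have hD := (hf.restrictScalars ℝ).ofReal_one_add_norm_sq
  have hD0 := ofReal_one_add_norm_sq_ne_zero (f z)
  have hDinv : DifferentiableAt ℝ (fun w => (((1 + ‖f w‖ ^ 2 : ℝ) : ℂ))⁻¹) z := hD.inv hD0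
  simp only [conj_stereoXY]
  rw [dzbar_mul ((hf.restrictScalars ℝ).conj.const_mul 2) hDinv, dzbar_inv hD hD0,
    hf.dzbar_one_add_norm_sq, dzbar_const_mul (hf.restrictScalars ℝ).conj, hf.dzbar_conj]
  rw [ofReal_one_add_norm_sq_eq] at hD0 ⊢
  field_simp
  ring

theorem DifferentiableAt.sphericalGradient_stereoXY (hf : DifferentiableAt ℂ f z)
    (hfz : deriv f z ≠ 0) :
    sphericalGradient f (stereoXY f) z = -f z ^ 2 / (2 * deriv f z) := by
  rw [sphericalGradient_eq_of_dzbar_eq hfz _ hf.dzbar_stereoXY]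
  field_simp
  ring

theorem DifferentiableAt.sphericalGradient_re_stereoXY (hf : DifferentiableAt ℂ f z)
    (hfz : deriv f z ≠ 0) :
    sphericalGradient f (fun w => ((stereoXY f w).re : ℂ)) z =
      (1 - f z ^ 2) / (4 * deriv f z) := by
  refine sphericalGradient_eq_of_dzbar_eq hfz _ ?_
  rw [dzbar_ofReal_re hf.differentiableAt_stereoXY, hf.dzbar_stereoXY, hf.dzbar_conj_stereoXY]
  ring

theorem DifferentiableAt.sphericalGradient_im_stereoXY (hf : DifferentiableAt ℂ f z)
    (hfz : deriv f z ≠ 0) :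
    sphericalGradient f (fun w => ((stereoXY f w).im : ℂ)) z =
      I * (1 + f z ^ 2) / (4 * deriv f z) := by
  refine sphericalGradient_eq_of_dzbar_eq hfz _ ?_
  rw [dzbar_ofReal_im hf.differentiableAt_stereoXY, hf.dzbar_stereoXY, hf.dzbar_conj_stereoXY]
  field_simp
  rw [I_sq]
  ring

end Sphere

/-- For `f` holomorphic on an open `U ⊆ ℂ`, `z ∈ U` with `f′(z) ≠ 0`,
`e^{2u} = 4|f′|²/(1+|f|²)²` and `ψ = 2f/(1+|f|²)`, one has at `z`:
(i) `e^{-2u}∂_z̄ψ = -f²/(2f′)`; (ii) `e^{-2u}∂_z̄(Re ψ) = (1 - f²)/(4f′)`;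
(iii) `e^{-2u}∂_z̄(Im ψ) = i(1 + f²)/(4f′)`. In particular the complex gradients of `Re ψ`
and `Im ψ` are holomorphic wherever `f′` is nonvanishing. -/
theorem stmt_9 (U : Set ℂ) (hU : IsOpen U) (f : ℂ → ℂ)
    (hf : DifferentiableOn ℂ f U) (z : ℂ) (hz : z ∈ U) (hfz : deriv f z ≠ 0) :
    (((1 + ‖f z‖ ^ 2) ^ 2 / (4 * ‖deriv f z‖ ^ 2) : ℝ) : ℂ) *
        dzbar (fun w => 2 * f w / ((1 + ‖f w‖ ^ 2 : ℝ) : ℂ)) z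
      = -(f z) ^ 2 / (2 * deriv f z) ∧
    (((1 + ‖f z‖ ^ 2) ^ 2 / (4 * ‖deriv f z‖ ^ 2) : ℝ) : ℂ) *
        dzbar (fun w =>
          (((2 * f w / ((1 + ‖f w‖ ^ 2 : ℝ) : ℂ)).re : ℝ) : ℂ)) z
      = (1 - (f z) ^ 2) / (4 * deriv f z) ∧
    (((1 + ‖f z‖ ^ 2) ^ 2 / (4 * ‖deriv f z‖ ^ 2) : ℝ) : ℂ) *
        dzbar (fun w =>
          (((2 * f w / ((1 + ‖f w‖ ^ 2 : ℝ) : ℂ)).im : ℝ) : ℂ)) z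
      = Complex.I * (1 + (f z) ^ 2) / (4 * deriv f z) := by
  have hfd := hf.differentiableAt (hU.mem_nhds hz)
  exact ⟨hfd.sphericalGradient_stereoXY hfz, hfd.sphericalGradient_re_stereoXY hfz,
    hfd.sphericalGradient_im_stereoXY hfz⟩
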